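/- arXiv:math/9810048 — 2 statements merged into one kernel-verified Lean document; each statement's English description precedes it below -/
import Mathlib

section
/- On ℂ^n with coordinates z_1,…,z_n and holomorphic volume form Φ = dz_1 ∧ ⋯ ∧ dz_n, let a = Σ f_i ∂/∂z_i and b = Σ g_j ∂/∂z_j be holomorphic vector fields that are divergence-free: Σ ∂f_i/∂z_i = Σ ∂g_j/∂z_j = 0. Identify vector fields with (n−1)-forms via v ↦ ι_v Φ, and define a * b = ι_{a∧b} Φ. Then ι_{[a,b]} Φ = ∂(a * b), i.e. the bracket [a,b] corresponds under the identification to the exterior derivative of the contraction ι_a ι_b Φ (Tian–Todorov type identity). -/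
noncomputable section

open Finset

/-- A (not a priori alternating) holomorphic-context `p`-form on `ℂᵐ`. -/
abbrev CForm (m p : ℕ) := (Fin m → ℂ) → (Fin p → (Fin m → ℂ)) → ℂ

/-- The (holomorphic) exterior derivative `∂`, defined pointwise on constant frames by
`∂ω(v₀,…,v_p) = Σᵢ (-1)ⁱ Dᵥᵢ(ω(v₀,…,v̂ᵢ,…,v_p))` with the complex Fréchet derivative. -/
def cExtD {m p : ℕ} (ω : CForm m p) : CForm m (p + 1) := fun x v =>
  ∑ i : Fin (p + 1), (-1 : ℂ) ^ (i : ℕ) * fderiv ℂ (fun y => ω y (i.removeNth v)) x (v i)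

/-- Interior multiplication (contraction) by a vector field. -/
def cIota {m p : ℕ} (X : (Fin m → ℂ) → (Fin m → ℂ)) (ω : CForm m (p + 1)) : CForm m p :=
  fun x v => ω x (Fin.cons (X x) v)

/-- The Lie derivative along a vector field. -/
def cLieD {m p : ℕ} (X : (Fin m → ℂ) → (Fin m → ℂ)) (ω : CForm m p) : CForm m p :=
  fun x v =>
    fderiv ℂ (fun y => ω y v) x (X x) +
      ∑ i : Fin p, ω x (Function.update v i (fderiv ℂ X x (v i)))

/-- The Lie bracket of vector fields: `[X,Y] = DY·X − DX·Y`. -/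
def cBracket {m : ℕ} (X Y : (Fin m → ℂ) → (Fin m → ℂ)) : (Fin m → ℂ) → (Fin m → ℂ) :=
  fun x => fderiv ℂ Y x (X x) - fderiv ℂ X x (Y x)

/-- The standard holomorphic volume form `Φ = dz₁ ∧ ⋯ ∧ dz_m` on `ℂᵐ`. -/
def volForm (m : ℕ) : CForm m m := fun _ v => Matrix.det (Matrix.of fun i j => v i j)

/-- Divergence of a holomorphic vector field: `Σᵢ ∂fᵢ/∂zᵢ`. -/
def cDiv {m : ℕ} (X : (Fin m → ℂ) → (Fin m → ℂ)) : (Fin m → ℂ) → ℂ := fun x =>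
  ∑ i : Fin m, fderiv ℂ X x (Pi.single i 1) i


namespace TTaux

open Finset Matrix

variable {n : ℕ}

/-- determinant of a tuple of rows -/
def dt {n : ℕ} (f : Fin n → Fin n → ℂ) : ℂ := Matrix.det (Matrix.of f)

lemma dt_update_add (f : Fin n → Fin n → ℂ) (j : Fin n) (u v : Fin n → ℂ) :
    dt (Function.update f j (u + v)) = dt (Function.update f j u) + dt (Function.update f j v) :=
  Matrix.det_updateRow_add (Matrix.of f) j u v

lemma dt_update_smul (f : Fin n → Fin n → ℂ) (j : Fin n) (c : ℂ) (u : Fin n → ℂ) :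
    dt (Function.update f j (c • u)) = c * dt (Function.update f j u) :=
  Matrix.det_updateRow_smul (Matrix.of f) j c u

lemma dt_update_sub (f : Fin n → Fin n → ℂ) (j : Fin n) (p q : Fin n → ℂ) :
    dt (Function.update f j (p - q)) = dt (Function.update f j p) - dt (Function.update f j q) := by
  have hq : -q = ((-1 : ℂ) • q) := by simp
  rw [sub_eq_add_neg, dt_update_add, hq, dt_update_smul]
  ring

lemma dt_cons_removeNth (g : Fin (n + 1) → Fin (n + 1) → ℂ) (p : Fin (n + 1)) :
    dt (Fin.cons (g p) (p.removeNth g)) = (-1 : ℂ) ^ (p : ℕ) * dt g := by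
  have h : (Fin.cons (g p) (p.removeNth g) : Fin (n + 1) → Fin (n + 1) → ℂ)
      = fun j => g (p.cycleRange.symm j) := by
    funext j
    induction j using Fin.cases with
    | zero => simp
    | succ k => simp [Fin.removeNth]
  have h2 := Matrix.det_permute (p.cycleRange.symm) (Matrix.of g)
  have hsgn : Equiv.Perm.sign p.cycleRange.symm = (-1 : ℤˣ) ^ (p : ℕ) := by
    rw [← Equiv.Perm.inv_def, map_inv, Fin.sign_cycleRange]
    simp
  rw [hsgn] at h2
  calc dt (Fin.cons (g p) (p.removeNth g))
      = ((Matrix.of g).submatrix p.cycleRange.symm id).det := by rw [dt, h]; rfl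
    _ = (-1 : ℂ) ^ (p : ℕ) * dt g := by
        rw [h2, dt]
        norm_num

lemma removeNth_succ_cons {α : Type*} (i : Fin (n + 1)) (u : α) (v : Fin (n + 1) → α) :
    Fin.removeNth (α := fun _ => α) i.succ (Fin.cons u v)
      = Fin.cons (α := fun _ => α) u (Fin.removeNth (α := fun _ => α) i v) := by
  funext j
  induction j using Fin.cases with
  | zero => simp [Fin.removeNth]
  | succ k => simp [Fin.removeNth, Fin.succ_succAbove_succ]

lemma dt_cons_cons (y u : Fin (n + 2) → ℂ) (v : Fin (n + 1) → Fin (n + 2) → ℂ) (i : Fin (n + 1)) :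
    dt (Fin.cons y (Fin.cons u (i.removeNth v))) =
      (-1 : ℂ) ^ ((i : ℕ) + 1) * dt (Function.update (Fin.cons u v) i.succ y) := by
  have h1 : Function.update (Fin.cons u v : Fin (n + 2) → Fin (n + 2) → ℂ) i.succ y i.succ = y := by
    simp
  have h2 : Fin.removeNth (α := fun _ => Fin (n + 2) → ℂ) i.succ
        (Function.update (Fin.cons u v) i.succ y)
      = Fin.cons (α := fun _ => Fin (n + 2) → ℂ) u (Fin.removeNth (α := fun _ => Fin (n + 2) → ℂ) i v) := by
    rw [Fin.removeNth_update, removeNth_succ_cons]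
  have h := dt_cons_removeNth (Function.update (Fin.cons u v) i.succ y) i.succ
  rw [h1, h2] at h
  simpa using h

lemma dt_swap (w y : Fin (n + 2) → ℂ) (r : Fin n → Fin (n + 2) → ℂ) :
    dt (Fin.cons w (Fin.cons y r)) = - dt (Fin.cons y (Fin.cons w r)) := by
  have h := dt_cons_removeNth (Fin.cons w (Fin.cons y r)) ((0 : Fin (n + 1)).succ)
  have h1 : (Fin.cons w (Fin.cons y r) : Fin (n + 2) → Fin (n + 2) → ℂ) (0 : Fin (n+1)).succ = y := by
    simp
  have h2 : Fin.removeNth (α := fun _ => Fin (n + 2) → ℂ) (0 : Fin (n + 1)).succ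
      (Fin.cons w (Fin.cons y r)) = Fin.cons (α := fun _ => Fin (n + 2) → ℂ) w r := by
    rw [removeNth_succ_cons]
    simp
  rw [h1, h2] at h
  simp at h
  linear_combination h

lemma dt_cons_cons' (w y : Fin (n + 2) → ℂ) (v : Fin (n + 1) → Fin (n + 2) → ℂ)
    (i : Fin (n + 1)) :
    dt (Fin.cons w (Fin.cons y (i.removeNth v))) =
      (-1 : ℂ) ^ (i : ℕ) * dt (Function.update (Fin.cons w v) i.succ y) := by
  rw [dt_swap, dt_cons_cons]
  rw [pow_succ]
  ring

lemma sum_dt_update (M : (Fin n → ℂ) →L[ℂ] (Fin n → ℂ)) (f : Fin n → Fin n → ℂ) :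
    ∑ j, dt (Function.update f j (M (f j))) = (∑ i, M (Pi.single i 1) i) * dt f := by
  classical
  set MM : Matrix (Fin n) (Fin n) ℂ := Matrix.of fun k l => M (Pi.single l 1) k with hMM
  have hMw : ∀ w : Fin n → ℂ, M w = MM *ᵥ w := by
    intro w
    have hw : w = ∑ l, w l • (Pi.single l 1 : Fin n → ℂ) := by
      funext j
      rw [Finset.sum_apply]
      simp [Pi.single_apply]
    have : M w = ∑ l, w l • M (Pi.single l 1) := by
      conv_lhs => rw [hw]
      rw [map_sum]
      simp
    funext k
    rw [this]
    simp [Matrix.mulVec, dotProduct, hMM, mul_comm, Finset.sum_apply]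
  set V : Matrix (Fin n) (Fin n) ℂ := Matrix.of f with hV
  have step : ∀ j, dt (Function.update f j (M (f j))) = ((Vᵀ.adjugate * MM) * Vᵀ) j j := by
    intro j
    have e1 : dt (Function.update f j (M (f j))) = (V.updateRow j (M (f j))).det := rfl
    rw [e1, ← Matrix.cramer_transpose_apply, Matrix.cramer_eq_adjugate_mulVec, hMw,
      Matrix.mulVec_mulVec]
    simp [Matrix.mulVec, dotProduct, Matrix.mul_apply, Matrix.transpose_apply, hV]
  rw [Finset.sum_congr rfl fun j _ => step j]
  have htr : ∑ j, ((Vᵀ.adjugate * MM) * Vᵀ) j j = Matrix.trace ((Vᵀ.adjugate * MM) * Vᵀ) := by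
    simp [Matrix.trace, Matrix.diag]
  rw [htr, Matrix.trace_mul_cycle, Matrix.mul_adjugate, Matrix.smul_mul, Matrix.one_mul,
    Matrix.trace_smul, Matrix.det_transpose]
  simp [Matrix.trace, Matrix.diag, hMM, dt, hV, smul_eq_mul]
  ring

/-- the bilinear map `(w, u) ↦ det (w, u, r₁, …)` -/
def detCons2 (r : Fin n → Fin (n + 2) → ℂ) :
    (Fin (n + 2) → ℂ) →ₗ[ℂ] (Fin (n + 2) → ℂ) →ₗ[ℂ] ℂ :=
  LinearMap.mk₂ ℂ (fun w u => dt (Fin.cons w (Fin.cons u r)))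
    (fun w w' u => by
      have key : ∀ z : Fin (n + 2) → ℂ,
          (Fin.cons z (Fin.cons u r) : Fin (n + 2) → Fin (n + 2) → ℂ)
            = Function.update (Fin.cons w (Fin.cons u r)) 0 z :=
        fun z => (Fin.update_cons_zero _ _ _).symm
      beta_reduce
      rw [key (w + w'), dt_update_add, Fin.update_cons_zero, Fin.update_cons_zero])
    (fun c w u => by
      have key : ∀ z : Fin (n + 2) → ℂ,
          (Fin.cons z (Fin.cons u r) : Fin (n + 2) → Fin (n + 2) → ℂ)
            = Function.update (Fin.cons w (Fin.cons u r)) 0 z :=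
        fun z => (Fin.update_cons_zero _ _ _).symm
      beta_reduce
      rw [key (c • w), dt_update_smul, Fin.update_cons_zero]
      rfl)
    (fun w u u' => by
      have key : ∀ z : Fin (n + 2) → ℂ,
          (Fin.cons w (Fin.cons z r) : Fin (n + 2) → Fin (n + 2) → ℂ)
            = Function.update (Fin.cons w (Fin.cons u r)) ((0 : Fin (n + 1)).succ) z := by
        intro z
        rw [← Fin.cons_update, Fin.update_cons_zero]
      beta_reduce
      rw [key (u + u'), dt_update_add, ← key u, ← key u'])
    (fun c w u => by
      have key : ∀ z : Fin (n + 2) → ℂ,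
          (Fin.cons w (Fin.cons z r) : Fin (n + 2) → Fin (n + 2) → ℂ)
            = Function.update (Fin.cons w (Fin.cons u r)) ((0 : Fin (n + 1)).succ) z := by
        intro z
        rw [← Fin.cons_update, Fin.update_cons_zero]
      beta_reduce
      rw [key (c • u), dt_update_smul, ← key u]
      rfl)

/-- `detCons2` as a continuous bilinear map -/
def detConsL (r : Fin n → Fin (n + 2) → ℂ) :
    (Fin (n + 2) → ℂ) →L[ℂ] (Fin (n + 2) → ℂ) →L[ℂ] ℂ :=
  LinearMap.toContinuousLinearMap
    ((LinearMap.toContinuousLinearMap :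
        ((Fin (n + 2) → ℂ) →ₗ[ℂ] ℂ) ≃ₗ[ℂ] ((Fin (n + 2) → ℂ) →L[ℂ] ℂ)).toLinearMap.comp
      (detCons2 r))

lemma detConsL_apply (r : Fin n → Fin (n + 2) → ℂ) (w u : Fin (n + 2) → ℂ) :
    detConsL r w u = dt (Fin.cons w (Fin.cons u r)) := rfl

lemma hasFDeriv_det (a b : (Fin (n + 2) → ℂ) → (Fin (n + 2) → ℂ))
    (ha : Differentiable ℂ a) (hb : Differentiable ℂ b)
    (r : Fin n → Fin (n + 2) → ℂ) (x : Fin (n + 2) → ℂ) :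
    HasFDerivAt (fun y => dt (Fin.cons (b y) (Fin.cons (a y) r)))
      (((detConsL r (b x)).comp (fderiv ℂ a x)) +
        (((detConsL r).comp (fderiv ℂ b x)).flip (a x))) x := by
  have hc : HasFDerivAt (fun y => detConsL r (b y)) ((detConsL r).comp (fderiv ℂ b x)) x :=
    ((detConsL r).hasFDerivAt).comp x (hb x).hasFDerivAt
  exact hc.clm_apply (ha x).hasFDerivAt

end TTaux

/-- Tian–Todorov type identity: on `ℂⁿ` (here `n = m + 2 ≥ 2`) with the
holomorphic volume form `Φ = dz₁ ∧ ⋯ ∧ dz_n`, let `a, b` be holomorphic vector fields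
which are divergence-free.  With `a * b := ι_a ι_b Φ`, one has `ι_{[a,b]} Φ = ∂(a * b)`,
i.e. the bracket corresponds, under `v ↦ ι_v Φ`, to the exterior derivative of the
contraction `ι_a ι_b Φ`. -/
theorem stmt12 {m : ℕ} (a b : (Fin (m + 2) → ℂ) → (Fin (m + 2) → ℂ))
    (ha : Differentiable ℂ a) (hb : Differentiable ℂ b)
    (hdiva : ∀ x, cDiv a x = 0) (hdivb : ∀ x, cDiv b x = 0) :
    ∀ (x : Fin (m + 2) → ℂ) (v : Fin (m + 1) → (Fin (m + 2) → ℂ)),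
      cIota (cBracket a b) (volForm (m + 2)) x v =
        cExtD (cIota a (cIota b (volForm (m + 2)))) x v := by
  intro x v
  have hterm : ∀ i : Fin (m + 1),
      fderiv ℂ (fun y => cIota a (cIota b (volForm (m + 2))) y (i.removeNth v)) x (v i)
        = TTaux.dt (Fin.cons (b x) (Fin.cons (fderiv ℂ a x (v i)) (i.removeNth v)))
          + TTaux.dt (Fin.cons (fderiv ℂ b x (v i)) (Fin.cons (a x) (i.removeNth v))) := by
    intro i
    have h := (TTaux.hasFDeriv_det a b ha hb (i.removeNth v) x).fderiv
    have h3 : (fun y => cIota a (cIota b (volForm (m + 2))) y (i.removeNth v))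
        = fun y => TTaux.dt (Fin.cons (b y) (Fin.cons (a y) (i.removeNth v))) := rfl
    rw [h3, h]
    simp [TTaux.detConsL_apply]
  have hRHS : cExtD (cIota a (cIota b (volForm (m + 2)))) x v
      = ∑ i : Fin (m + 1), (-1 : ℂ) ^ (i : ℕ) *
          (TTaux.dt (Fin.cons (b x) (Fin.cons (fderiv ℂ a x (v i)) (i.removeNth v)))
            + TTaux.dt (Fin.cons (fderiv ℂ b x (v i)) (Fin.cons (a x) (i.removeNth v)))) := by
    unfold cExtD
    exact Finset.sum_congr rfl fun i _ => by rw [hterm i]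
  have hsummand : ∀ i : Fin (m + 1), (-1 : ℂ) ^ (i : ℕ) *
          (TTaux.dt (Fin.cons (b x) (Fin.cons (fderiv ℂ a x (v i)) (i.removeNth v)))
            + TTaux.dt (Fin.cons (fderiv ℂ b x (v i)) (Fin.cons (a x) (i.removeNth v))))
      = TTaux.dt (Function.update (Fin.cons (b x) v) i.succ (fderiv ℂ a x (v i)))
        - TTaux.dt (Function.update (Fin.cons (a x) v) i.succ (fderiv ℂ b x (v i))) := by
    intro i
    rw [TTaux.dt_cons_cons', TTaux.dt_cons_cons]
    set c := (-1 : ℂ) ^ (i : ℕ) with hc0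
    have hc : c * c = 1 := by rw [hc0, ← mul_pow]; norm_num
    rw [pow_succ, ← hc0]
    linear_combination
      (TTaux.dt (Function.update (Fin.cons (b x) v) i.succ (fderiv ℂ a x (v i)))
        - TTaux.dt (Function.update (Fin.cons (a x) v) i.succ (fderiv ℂ b x (v i)))) * hc
  have hA := TTaux.sum_dt_update (fderiv ℂ a x) (Fin.cons (b x) v)
  have hB := TTaux.sum_dt_update (fderiv ℂ b x) (Fin.cons (a x) v)
  have hza : (∑ i : Fin (m + 2), fderiv ℂ a x (Pi.single i 1) i) = 0 := hdiva x
  have hzb : (∑ i : Fin (m + 2), fderiv ℂ b x (Pi.single i 1) i) = 0 := hdivb x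
  rw [hza, zero_mul, Fin.sum_univ_succ] at hA
  rw [hzb, zero_mul, Fin.sum_univ_succ] at hB
  simp only [Fin.cons_zero, Fin.cons_succ, Fin.update_cons_zero] at hA hB
  have hL : cIota (cBracket a b) (volForm (m + 2)) x v
      = TTaux.dt (Fin.cons (fderiv ℂ b x (a x) - fderiv ℂ a x (b x)) v) := rfl
  have e1 : TTaux.dt (Fin.cons (fderiv ℂ b x (a x) - fderiv ℂ a x (b x)) v)
      = TTaux.dt (Fin.cons (fderiv ℂ b x (a x)) v)
        - TTaux.dt (Fin.cons (fderiv ℂ a x (b x)) v) := by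
    have k : ∀ z : Fin (m + 2) → ℂ,
        (Fin.cons z v : Fin (m + 2) → Fin (m + 2) → ℂ)
          = Function.update (Fin.cons (fderiv ℂ b x (a x)) v) 0 z :=
      fun z => (Fin.update_cons_zero _ _ _).symm
    rw [k (fderiv ℂ b x (a x) - fderiv ℂ a x (b x)), TTaux.dt_update_sub,
      ← k (fderiv ℂ b x (a x)), ← k (fderiv ℂ a x (b x))]
  rw [hL, hRHS, Finset.sum_congr rfl fun i _ => hsummand i, Finset.sum_sub_distrib, e1]
  linear_combination hB - hA

end
end

section
/- Let (R_n, m) be an Artinian local ℂ-algebra with m^{n+1} = 0 and residue field ℂ, V_0 = R_n* its dual comodule. Every ℂ-linear endomorphism φ of V_0 commuting with the comultiplication V_0 → m* ⊗ V_0 (dual to multiplication m ⊗ R_n → R_n) and preserving the filtration of V_0 by annihilators of powers of m is given by the transpose of multiplication by a unique element r ∈ R_n; hence Hom_{MOS}(V_0, V_0) ≅ R_n as rings. -/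
/-!
Write `τ r` for the transpose of multiplication by `r`. As the residue field is `ℂ`, every
`r ∈ R` is a scalar plus an element of `m`, so `φ` commutes with every `τ r`. By
Hopkins–Levitzki an Artinian ring that is finite over `ℂ` modulo its radical is finite over `ℂ`,
so `R` is reflexive and there is `r ∈ R` with `f r = φ f 1` for all `f`. Then
`φ f x = φ (τ x f) 1 = τ x f r = f (r x)`, i.e. `φ = τ r`; and `r` is unique because
`τ r f 1 = f r`.
-/

open IsLocalRing

section ResidueField

variable {k R : Type*} [Field k] [CommRing R] [Algebra k R] [IsLocalRing R]

theorem IsLocalRing.finite_quotient_maximalIdeal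
    (hres : ∀ r : R, ∃ c : k, r - algebraMap k R c ∈ maximalIdeal R) :
    Module.Finite k (R ⧸ maximalIdeal R) := by
  refine ⟨⟨{1}, Submodule.eq_top_iff'.2 fun x => ?_⟩⟩
  obtain ⟨r, rfl⟩ := Ideal.Quotient.mk_surjective x
  obtain ⟨c, hc⟩ := hres r
  rw [Finset.coe_singleton, Submodule.mem_span_singleton]
  refine ⟨c, ?_⟩
  rw [← Algebra.algebraMap_eq_smul_one, ← Ideal.Quotient.mk_algebraMap]
  exact (Ideal.Quotient.eq.2 hc).symm

theorem IsLocalRing.finite_of_isArtinianRing [IsArtinianRing R]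
    (hres : ∀ r : R, ∃ c : k, r - algebraMap k R c ∈ maximalIdeal R) :
    Module.Finite k R := by
  have : Module.Finite k (R ⧸ Ring.jacobson R) := by
    rw [ringJacobson_eq_maximalIdeal]
    exact finite_quotient_maximalIdeal hres
  exact IsSemiprimaryRing.finite_of_isArtinian k R R

end ResidueField

section TransposeMul

variable {k R : Type*} [Field k] [CommRing R] [Algebra k R]

theorem dualMap_mulLeft_add_algebraMap (a : R) (c : k) :
    (LinearMap.mulLeft k (a + algebraMap k R c)).dualMap =
      (LinearMap.mulLeft k a).dualMap + c • LinearMap.id := by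
  ext f x
  simp [add_mul, ← Algebra.smul_def]

theorem dualMap_mulLeft_injective :
    Function.Injective fun r : R => (LinearMap.mulLeft k r).dualMap := by
  intro r s h
  refine Module.eval_apply_injective k (LinearMap.ext fun f => ?_)
  simpa using congrArg (fun τ : Module.Dual k R →ₗ[k] Module.Dual k R => τ f 1) h

theorem commute_dualMap_mulLeft_of_commute_maximalIdeal [IsLocalRing R]
    (hres : ∀ r : R, ∃ c : k, r - algebraMap k R c ∈ maximalIdeal R)
    {φ : Module.Dual k R →ₗ[k] Module.Dual k R}
    (hcomm : ∀ a ∈ maximalIdeal R,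
      φ ∘ₗ (LinearMap.mulLeft k a).dualMap = (LinearMap.mulLeft k a).dualMap ∘ₗ φ)
    (r : R) :
    φ ∘ₗ (LinearMap.mulLeft k r).dualMap = (LinearMap.mulLeft k r).dualMap ∘ₗ φ := by
  obtain ⟨c, hc⟩ := hres r
  rw [← sub_add_cancel r (algebraMap k R c), dualMap_mulLeft_add_algebraMap,
    LinearMap.comp_add, LinearMap.add_comp, hcomm _ hc, LinearMap.comp_smul, LinearMap.smul_comp,
    LinearMap.comp_id, LinearMap.id_comp]

theorem exists_eq_dualMap_mulLeft [FiniteDimensional k R]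
    {φ : Module.Dual k R →ₗ[k] Module.Dual k R}
    (hcomm : ∀ r : R,
      φ ∘ₗ (LinearMap.mulLeft k r).dualMap = (LinearMap.mulLeft k r).dualMap ∘ₗ φ) :
    ∃ r : R, φ = (LinearMap.mulLeft k r).dualMap := by
  set r := (Module.evalEquiv k R).symm (Module.Dual.eval k R 1 ∘ₗ φ)
  have hr : ∀ f, f r = φ f 1 := fun f => Module.apply_evalEquiv_symm_apply k R f _
  refine ⟨r, LinearMap.ext fun f => LinearMap.ext fun x => ?_⟩
  calc φ f x = φ ((LinearMap.mulLeft k x).dualMap f) 1 := by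
        simpa using (congrArg (fun τ : Module.Dual k R →ₗ[k] Module.Dual k R => τ f 1)
          (hcomm x)).symm
    _ = f (x * r) := (hr _).symm
    _ = (LinearMap.mulLeft k r).dualMap f x := by simp [mul_comm]

end TransposeMul

theorem stmt15_general (R : Type) [CommRing R] [Algebra ℂ R] [IsArtinianRing R] [IsLocalRing R]
    (hres : ∀ r : R, ∃ c : ℂ, r - algebraMap ℂ R c ∈ IsLocalRing.maximalIdeal R)
    (φ : Module.Dual ℂ R →ₗ[ℂ] Module.Dual ℂ R)
    (hcomm : ∀ a ∈ IsLocalRing.maximalIdeal R,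
      φ ∘ₗ (LinearMap.mulLeft ℂ a).dualMap = (LinearMap.mulLeft ℂ a).dualMap ∘ₗ φ) :
    ∃! r : R, φ = (LinearMap.mulLeft ℂ r).dualMap := by
  have : Module.Finite ℂ R := finite_of_isArtinianRing hres
  obtain ⟨r, hr⟩ :=
    exists_eq_dualMap_mulLeft (commute_dualMap_mulLeft_of_commute_maximalIdeal hres hcomm)
  exact ⟨r, hr, fun s hs => dualMap_mulLeft_injective (hs.symm.trans hr)⟩

/-- Let `(Rₙ, m)` be an Artinian local `ℂ`-algebra with `m^{n+1} = 0` and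
residue field `ℂ`, and let `V₀ = Rₙ* = Hom_ℂ(Rₙ, ℂ)` with the filtration
`V₀ⁱ = {f : f(m^{i+1}) = 0}` (the annihilator of `m^{i+1}`).  Every `ℂ`-linear
endomorphism `φ` of `V₀` that preserves this filtration and commutes with the
comultiplication dual to `m ⊗ Rₙ → Rₙ` — equivalently, commutes with the transpose
`τ_a : f ↦ (x ↦ f(ax))` of multiplication by every `a ∈ m` — is the transpose of
multiplication by a unique `r ∈ Rₙ`; hence `Hom_MOS(V₀, V₀) ≅ Rₙ`. -/
theorem stmt15 (R : Type) [CommRing R] [Algebra ℂ R] [IsArtinianRing R] [IsLocalRing R]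
    (n : ℕ) (hnil : (IsLocalRing.maximalIdeal R) ^ (n + 1) = ⊥)
    (hres : ∀ r : R, ∃ c : ℂ, r - algebraMap ℂ R c ∈ IsLocalRing.maximalIdeal R)
    (φ : Module.Dual ℂ R →ₗ[ℂ] Module.Dual ℂ R)
    (hfilt : ∀ i : ℕ, ∀ f ∈ (((IsLocalRing.maximalIdeal R) ^ (i + 1) :
        Ideal R).restrictScalars ℂ).dualAnnihilator,
      φ f ∈ (((IsLocalRing.maximalIdeal R) ^ (i + 1) :
        Ideal R).restrictScalars ℂ).dualAnnihilator)
    (hcomm : ∀ a ∈ IsLocalRing.maximalIdeal R,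
      φ ∘ₗ (LinearMap.mulLeft ℂ a).dualMap = (LinearMap.mulLeft ℂ a).dualMap ∘ₗ φ) :
    ∃! r : R, φ = (LinearMap.mulLeft ℂ r).dualMap :=
  stmt15_general R hres φ hcomm
end
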